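/- Let G be an r-regular graph and H a graph with |V(G)| = |V(H)|. Define an instance of Seat Arrangement with agents P = V(H), seat graph G, and binary symmetric preferences f_p(q) = f_q(p) = 1 if {p,q} ∈ E(H) and 0 otherwise. Then there is a bijection g : V(G) → V(H) such that {g(u), g(v)} ∈ E(H) for every {u,v} ∈ E(G) if and only if there is an arrangement π with min_{p ∈ P} U_p(π) ≥ r. -/
import Mathlib


open scoped Classical

noncomputable section

namespace SeatArrangement

variable {P V : Type*}

/-- The utility of agent `p` under arrangement `π`:
the sum, over the seat-graph neighbors `v` of `π p`, of `p`'s preference for the agent seated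
at `v`. -/
def utility [Fintype V] (G : SimpleGraph V) (f : P → P → ℝ) (π : P ≃ V) (p : P) : ℝ :=
  ∑ v : V, if G.Adj (π p) v then f p (π.symm v) else 0

/-- The social welfare of an arrangement: the sum of the utilities of all agents. -/
def sw [Fintype P] [Fintype V] (G : SimpleGraph V) (f : P → P → ℝ) (π : P ≃ V) : ℝ :=
  ∑ p : P, utility G f π p

/-- The `(p,q)`-swap arrangement of `π`. -/
def swapArr (π : P ≃ V) (p q : P) : P ≃ V := (Equiv.swap p q).trans π

/-- `{p, q}` is a blocking pair for `π`: both agents strictly improve by swapping seats. -/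
def blocking [Fintype V] (G : SimpleGraph V) (f : P → P → ℝ) (π : P ≃ V) (p q : P) : Prop :=
  p ≠ q ∧ utility G f π p < utility G f (swapArr π p q) p
        ∧ utility G f π q < utility G f (swapArr π p q) q

/-- An arrangement is stable if it has no blocking pair. -/
def stable [Fintype V] (G : SimpleGraph V) (f : P → P → ℝ) (π : P ≃ V) : Prop :=
  ∀ p q : P, ¬ blocking G f π p q

/-- An arrangement is envy-free if no agent would strictly improve by taking
another agent's seat (via a swap). -/
def envyFree [Fintype V] (G : SimpleGraph V) (f : P → P → ℝ) (π : P ≃ V) : Prop :=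
  ∀ p q : P, p ≠ q → utility G f (swapArr π p q) p ≤ utility G f π p

/-- The least utility of an agent under `π` (for a finite nonempty set of agents, the
infimum of the range of utilities is the minimum utility). -/
def minUtil [Fintype V] (G : SimpleGraph V) (f : P → P → ℝ) (π : P ≃ V) : ℝ :=
  sInf (Set.range (utility G f π))

/-- A maximin arrangement maximizes the least utility of an agent. -/
def maximin [Fintype V] (G : SimpleGraph V) (f : P → P → ℝ) (πf : P ≃ V) : Prop :=
  ∀ π : P ≃ V, minUtil G f π ≤ minUtil G f πf

/-- A maximum arrangement maximizes the social welfare. -/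
def maximum [Fintype P] [Fintype V] (G : SimpleGraph V) (f : P → P → ℝ) (πm : P ≃ V) : Prop :=
  ∀ π : P ≃ V, sw G f π ≤ sw G f πm

end SeatArrangement

open SeatArrangement

/-- for an `r`-regular graph `G` and a graph `H` with `|V(G)| = |V(H)|`,
agents `V(H)`, seat graph `G`, and binary symmetric preferences given by adjacency in `H`,
there is a bijection `g : V(G) → V(H)` mapping edges of `G` to edges of `H` if and only if
some arrangement gives every agent utility at least `r`. -/
theorem spanning_subgraph_iff_maximin_regular {VG VH : Type*} [Fintype VG] [Fintype VH]
    (G : SimpleGraph VG) (H : SimpleGraph VH) (r : ℕ)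
    (hreg : G.IsRegularOfDegree r)
    (hcard : Fintype.card VG = Fintype.card VH) :
    (∃ g : VG → VH, Function.Bijective g ∧
      ∀ u v : VG, G.Adj u v → H.Adj (g u) (g v)) ↔
    (∃ π : VH ≃ VG, ∀ p : VH,
      (r : ℝ) ≤ utility G (fun p q => if H.Adj p q then 1 else 0) π p) := by
  have hdeg : ∀ u : VG, ∑ v : VG, (if G.Adj u v then (1:ℝ) else 0) = (r : ℝ) := by
    intro u
    rw [Finset.sum_boole, ← SimpleGraph.neighborFinset_eq_filter]
    exact_mod_cast hreg u
  constructor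
  · rintro ⟨g, hg, hedge⟩
    set πg := (Equiv.ofBijective g hg).symm with hπg
    refine ⟨πg, fun p => ?_⟩
    have key : utility G (fun p q => if H.Adj p q then 1 else 0) πg p
        = ∑ v : VG, (if G.Adj (πg p) v then (1:ℝ) else 0) := by
      unfold utility
      apply Finset.sum_congr rfl
      intro v _
      by_cases h : G.Adj (πg p) v
      · have hgp : g (πg p) = p := (Equiv.ofBijective g hg).apply_symm_apply p
        have hH : H.Adj p (πg.symm v) := by
          have h2 := hedge _ _ h
          rw [hgp] at h2
          exact h2
        simp [h, hH]
      · simp [h]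
    rw [key, hdeg]
  · rintro ⟨π, hπ⟩
    refine ⟨π.symm, π.symm.bijective, ?_⟩
    intro u v huv
    set p := π.symm u with hp
    have hpu : π p = u := π.apply_symm_apply u
    have hle : ∀ w : VG,
        (if G.Adj (π p) w then (if H.Adj p (π.symm w) then (1:ℝ) else 0) else 0)
        ≤ (if G.Adj (π p) w then (1:ℝ) else 0) := by
      intro w; by_cases h : G.Adj (π p) w <;> simp [h] <;> split <;> norm_num
    have hsum : ∑ w : VG, (if G.Adj (π p) w then (if H.Adj p (π.symm w) then (1:ℝ) else 0) else 0)
        = ∑ w : VG, (if G.Adj (π p) w then (1:ℝ) else 0) := by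
      have h1 := Finset.sum_le_sum (s := Finset.univ) (fun w _ => hle w)
      have h2 : (r:ℝ) ≤ _ := hπ p
      rw [utility] at h2
      have h3 := hdeg (π p)
      linarith
    have heq := (Finset.sum_eq_sum_iff_of_le (fun w _ => hle w)).mp hsum v (Finset.mem_univ v)
    rw [hpu] at heq
    simp only [huv, if_true] at heq
    by_contra hH
    rw [if_neg hH] at heq
    norm_num at heq
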